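/- arXiv:2007.07400 — 2 statements merged into one kernel-verified Lean document; each statement's English description precedes it below -/
import Mathlib

section
/- (Multi-head forgetting bound.) In the multi-head frozen feature model, let θ' = θ − η • Σ_{i∈S} ℓ'(⟨h_j, θ.mulVec(g(x_i))⟩, y_i) • (h_j ⬝ g(x_i)ᵀ) be one SGD step through head h_j with η ≥ 0. Then for any head h_k and any test point x, |⟨h_k, θ'.mulVec(g(x))⟩ − ⟨h_k, θ.mulVec(g(x))⟩| ≤ η · |⟨h_j, h_k⟩| · sqrt(Σ_{i∈S} Θ(x, x_i)²) · sqrt(Σ_{i∈S} ℓ'(⟨h_j, θ.mulVec(g(x_i))⟩, y_i)²). In particular, the change in original-task predictions is proportional both to the feature overlap with the new task data and to the similarity ⟨h_j, h_k⟩ between the model heads. -/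
/-!
The update `θ' - θ` is a sum of rank-one matrices `h j ⬝ g(xᵢ)ᵀ`, so the head-`k` logit at `x`
moves by exactly `-η ⟪h j, h k⟫ ∑ᵢ Θ(x, xᵢ) ℓ'ᵢ`; Cauchy–Schwarz over `S` bounds the sum.
-/

open scoped RealInnerProductSpace

theorem Finset.abs_sum_mul_le_sqrt_mul_sqrt {ι : Type*} (s : Finset ι) (f g : ι → ℝ) :
    |∑ i ∈ s, f i * g i| ≤ √(∑ i ∈ s, f i ^ 2) * √(∑ i ∈ s, g i ^ 2) := by
  rw [← Real.sqrt_mul (Finset.sum_nonneg fun i _ => sq_nonneg (f i))]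
  exact Real.abs_le_sqrt (Finset.sum_mul_sq_le_sq_mul_sq s f g)

section

variable {m n : Type*} [Fintype m] [Fintype n]

theorem inner_toLp_vecMulVec_mulVec (u v : EuclideanSpace ℝ m) (w z : EuclideanSpace ℝ n) :
    ⟪u, WithLp.toLp 2 ((Matrix.vecMulVec v w).mulVec z)⟫ = ⟪v, u⟫ * ⟪z, w⟫ := by
  simp [Matrix.vecMulVec_mulVec, inner_smul_right, EuclideanSpace.inner_eq_star_dotProduct,
    dotProduct_comm, mul_comm]

theorem inner_toLp_mulVec_sub_smul_sum_vecMulVec {ι : Type*} (S : Finset ι)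
    (u v : EuclideanSpace ℝ m) (w : ι → EuclideanSpace ℝ n) (z : EuclideanSpace ℝ n)
    (θ : Matrix m n ℝ) (η : ℝ) (c : ι → ℝ) :
    ⟪u, WithLp.toLp 2 ((θ - η • ∑ i ∈ S, c i • Matrix.vecMulVec v (w i)).mulVec z)⟫ -
        ⟪u, WithLp.toLp 2 (θ.mulVec z)⟫ =
      -(η * ⟪v, u⟫ * ∑ i ∈ S, ⟪z, w i⟫ * c i) := by
  simp only [Matrix.sub_mulVec, Matrix.smul_mulVec, Matrix.sum_mulVec, WithLp.toLp_sub,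
    WithLp.toLp_smul, WithLp.toLp_sum, inner_sub_right, inner_smul_right, inner_sum,
    inner_toLp_vecMulVec_mulVec, Finset.mul_sum, sub_sub_cancel_left]
  congr 1
  exact Finset.sum_congr rfl fun i _ => by ring

end

theorem multihead_forgetting_bound_general
    {α ι : Type*} {p a : ℕ}
    (g : α → EuclideanSpace ℝ (Fin p))
    (S : Finset ι) (x : ι → α) (y : ι → ℝ)
    (ℓ' : ℝ → ℝ → ℝ)
    (η : ℝ) (hη : 0 ≤ η)
    (h : ℕ → EuclideanSpace ℝ (Fin a)) (j k : ℕ)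
    (θ θ' : Matrix (Fin a) (Fin p) ℝ)
    (hθ' : θ' = θ - η • ∑ i ∈ S,
      ℓ' (⟪h j, (WithLp.toLp 2 (θ.mulVec (g (x i))) : EuclideanSpace ℝ (Fin a))⟫) (y i) •
        Matrix.vecMulVec (h j) (g (x i)))
    (xtest : α) :
    |⟪h k, (WithLp.toLp 2 (θ'.mulVec (g xtest)) : EuclideanSpace ℝ (Fin a))⟫ -
        ⟪h k, (WithLp.toLp 2 (θ.mulVec (g xtest)) : EuclideanSpace ℝ (Fin a))⟫| ≤
      η * |⟪h j, h k⟫| *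
        Real.sqrt (∑ i ∈ S, (⟪g xtest, g (x i)⟫) ^ 2) *
        Real.sqrt (∑ i ∈ S,
          (ℓ' (⟪h j, (WithLp.toLp 2 (θ.mulVec (g (x i))) : EuclideanSpace ℝ (Fin a))⟫) (y i)) ^ 2) := by
  rw [hθ', inner_toLp_mulVec_sub_smul_sum_vecMulVec, abs_neg, abs_mul, abs_mul, abs_of_nonneg hη,
    mul_assoc (η * _)]
  gcongr
  exact Finset.abs_sum_mul_le_sqrt_mul_sqrt _ _ _

/-- **Multi-head forgetting bound.** After one SGD step through head `h j` with `η ≥ 0`,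
`θ' = θ − η • ∑ i ∈ S, ℓ'(⟪h j, θ.mulVec (g (x i))⟫, y i) • (h j ⬝ (g (x i))ᵀ)`,
the change in the head-`k` logit at any test point is bounded by
`η · |⟪h j, h k⟫| · ‖(Θ(xtest, x i))_{i∈S}‖ · ‖(ℓ'(…))_{i∈S}‖`: proportional both to the
feature overlap with the new task data and to the similarity between the model heads. -/
theorem multihead_forgetting_bound
    {α ι : Type*} {p a : ℕ}
    (g : α → EuclideanSpace ℝ (Fin p))
    (S : Finset ι) (x : ι → α) (y : ι → ℝ)
    (ℓ ℓ' : ℝ → ℝ → ℝ)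
    (η : ℝ) (hη : 0 ≤ η)
    (h : ℕ → EuclideanSpace ℝ (Fin a)) (j k : ℕ)
    (θ θ' : Matrix (Fin a) (Fin p) ℝ)
    (hθ' : θ' = θ - η • ∑ i ∈ S,
      ℓ' (⟪h j, (WithLp.toLp 2 (θ.mulVec (g (x i))) : EuclideanSpace ℝ (Fin a))⟫) (y i) •
        Matrix.vecMulVec (h j) (g (x i)))
    (xtest : α) :
    |⟪h k, (WithLp.toLp 2 (θ'.mulVec (g xtest)) : EuclideanSpace ℝ (Fin a))⟫ -
        ⟪h k, (WithLp.toLp 2 (θ.mulVec (g xtest)) : EuclideanSpace ℝ (Fin a))⟫| ≤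
      η * |⟪h j, h k⟫| *
        Real.sqrt (∑ i ∈ S, (⟪g xtest, g (x i)⟫) ^ 2) *
        Real.sqrt (∑ i ∈ S,
          (ℓ' (⟪h j, (WithLp.toLp 2 (θ.mulVec (g (x i))) : EuclideanSpace ℝ (Fin a))⟫) (y i)) ^ 2) :=
  multihead_forgetting_bound_general g S x y ℓ' η hη h j k θ θ' hθ' xtest
end

section
/- The linear CKA similarity is invariant under orthogonal transformation of either representation: for matrices X ∈ Matrix (Fin m) (Fin n₁) ℝ and Y ∈ Matrix (Fin m) (Fin n₂) ℝ with XᵀX ≠ 0 and YᵀY ≠ 0, and for orthogonal matrices Q ∈ Matrix (Fin n₁) (Fin n₁) ℝ (QᵀQ = 1) and R ∈ Matrix (Fin n₂) (Fin n₂) ℝ (RᵀR = 1), one has CKA(X ⬝ Q, Y ⬝ R) = CKA(X, Y). -/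
/-- The Frobenius norm of a real matrix. -/
noncomputable def frobNorm {m n : Type*} [Fintype m] [Fintype n]
    (A : Matrix m n ℝ) : ℝ :=
  Real.sqrt (∑ i, ∑ j, (A i j) ^ 2)

/-- The linear-kernel centered kernel alignment (CKA) similarity between two
representations `X` and `Y` of the same dataset of `m` examples:
`CKA(X, Y) = ‖XᵀY‖_F² / (‖XᵀX‖_F · ‖YᵀY‖_F)`. -/
noncomputable def CKA {m n₁ n₂ : ℕ}
    (X : Matrix (Fin m) (Fin n₁) ℝ) (Y : Matrix (Fin m) (Fin n₂) ℝ) : ℝ :=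
  frobNorm (X.transpose * Y) ^ 2 / (frobNorm (X.transpose * X) * frobNorm (Y.transpose * Y))

namespace Matrix

variable {k l p q : Type*} [Fintype k] [Fintype l] [Fintype p] [Fintype q]

theorem frobNorm_eq_sqrt_trace_transpose_mul_self (A : Matrix k l ℝ) :
    frobNorm A = √(trace (Aᵀ * A)) := by
  simp only [frobNorm, trace, diag, mul_apply, transpose_apply, sq]
  rw [Finset.sum_comm]

theorem frobNorm_transpose (A : Matrix k l ℝ) : frobNorm Aᵀ = frobNorm A := by
  simp only [frobNorm, transpose_apply]
  rw [Finset.sum_comm]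

theorem frobNorm_mul_of_transpose_mul_self_eq_one [DecidableEq k] {P : Matrix p k ℝ}
    (hP : Pᵀ * P = 1) (M : Matrix k l ℝ) : frobNorm (P * M) = frobNorm M := by
  rw [frobNorm_eq_sqrt_trace_transpose_mul_self, frobNorm_eq_sqrt_trace_transpose_mul_self,
    transpose_mul, Matrix.mul_assoc, ← Matrix.mul_assoc Pᵀ, hP, Matrix.one_mul]

theorem frobNorm_mul_of_mul_transpose_self_eq_one [DecidableEq l] {R : Matrix l q ℝ}
    (hR : R * Rᵀ = 1) (M : Matrix k l ℝ) : frobNorm (M * R) = frobNorm M := by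
  rw [← frobNorm_transpose, transpose_mul,
    frobNorm_mul_of_transpose_mul_self_eq_one (by rwa [transpose_transpose]), frobNorm_transpose]

theorem frobNorm_transpose_mul_mul_of_orthogonal [DecidableEq k] [DecidableEq l]
    {Q : Matrix k k ℝ} {R : Matrix l l ℝ} (hQ : Qᵀ * Q = 1) (hR : Rᵀ * R = 1) (M : Matrix k l ℝ) :
    frobNorm (Qᵀ * M * R) = frobNorm M := by
  rw [frobNorm_mul_of_mul_transpose_self_eq_one (mul_eq_one_comm.mp hR),
    frobNorm_mul_of_transpose_mul_self_eq_one (by rw [transpose_transpose, mul_eq_one_comm.mp hQ])]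

end Matrix

open Matrix in
theorem CKA_orthogonal_invariant_general {m n₁ n₂ : ℕ}
    (X : Matrix (Fin m) (Fin n₁) ℝ) (Y : Matrix (Fin m) (Fin n₂) ℝ)
    (Q : Matrix (Fin n₁) (Fin n₁) ℝ) (hQ : Q.transpose * Q = 1)
    (R : Matrix (Fin n₂) (Fin n₂) ℝ) (hR : R.transpose * R = 1) :
    CKA (X * Q) (Y * R) = CKA X Y := by
  have gram {n n' : ℕ} (A : Matrix (Fin m) (Fin n) ℝ) (B : Matrix (Fin m) (Fin n') ℝ)
      (U : Matrix (Fin n) (Fin n) ℝ) (V : Matrix (Fin n') (Fin n') ℝ) :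
      (A * U)ᵀ * (B * V) = Uᵀ * (Aᵀ * B) * V := by
    simp only [transpose_mul, Matrix.mul_assoc]
  simp only [CKA, gram, frobNorm_transpose_mul_mul_of_orthogonal hQ hR,
    frobNorm_transpose_mul_mul_of_orthogonal hQ hQ, frobNorm_transpose_mul_mul_of_orthogonal hR hR]

/-- **Linear CKA is invariant under orthogonal transformation of either representation.**
For `XᵀX ≠ 0`, `YᵀY ≠ 0` and orthogonal matrices `Q` (`QᵀQ = 1`) and `R` (`RᵀR = 1`),
`CKA(XQ, YR) = CKA(X, Y)`. -/
theorem CKA_orthogonal_invariant {m n₁ n₂ : ℕ}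
    (X : Matrix (Fin m) (Fin n₁) ℝ) (Y : Matrix (Fin m) (Fin n₂) ℝ)
    (hX : X.transpose * X ≠ 0) (hY : Y.transpose * Y ≠ 0)
    (Q : Matrix (Fin n₁) (Fin n₁) ℝ) (hQ : Q.transpose * Q = 1)
    (R : Matrix (Fin n₂) (Fin n₂) ℝ) (hR : R.transpose * R = 1) :
    CKA (X * Q) (Y * R) = CKA X Y :=
  CKA_orthogonal_invariant_general X Y Q hQ R hR
end
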